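/- Let n ∈ ℕ and α, β > −1 be real, let L = 2n+α+β+1, and define Y(θ) = (1−cos θ)^((2α+1)/4)·(1+cos θ)^((2β+1)/4)·P_n^{(α,β)}(cos θ) for θ ∈ (0,π). Then for every θ ∈ (0,π) with P_n^{(α,β)}(cos θ) ≠ 0: sin θ · Y'(θ)/Y(θ) = 1/2 + α + L·sin²(θ/2) − 2(n+α+β+1)·sin²(θ/2)·P_n^{(α+1,β)}(cos θ)/P_n^{(α,β)}(cos θ). -/

import Mathlib

/-!
With `u = (x - 1) / 2` and `v = (x + 1) / 2`, `P_n^{(α,β)}` is a sum of monomials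
`u^(n-m) v^m`. Pascal's rule in the upper parameter `n + α` and the absorption identity
`C(t, k+1) (k+1) = C(t, k) (t - k)` give
`(1 + x) P_n^{(α,β)}'(x) = (n + α + β + 1) (P_n^{(α+1,β)}(x) - P_n^{(α,β)}(x))`.
Logarithmic differentiation of `Y` then yields the formula, using
`sin² θ = (1 - cos θ)(1 + cos θ)` and `2 sin² (θ/2) = 1 - cos θ`.
-/

open Real Filter Set

/-- Generalized binomial coefficient `C(t, k) = t(t-1)⋯(t-k+1)/k!`. -/
noncomputable def genBinom (t : ℝ) (k : ℕ) : ℝ :=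
  (∏ i ∈ Finset.range k, (t - i)) / (Nat.factorial k)

/-- The Jacobi polynomial `P_n^{(α,β)}(x)`. -/
noncomputable def jacobiP (n : ℕ) (α β : ℝ) (x : ℝ) : ℝ :=
  ∑ m ∈ Finset.range (n + 1),
    genBinom (n + α) m * genBinom (n + β) (n - m) * ((x - 1) / 2) ^ (n - m) * ((x + 1) / 2) ^ m

@[simp]
lemma genBinom_zero (t : ℝ) : genBinom t 0 = 1 := by simp [genBinom]

lemma genBinom_succ_mul (t : ℝ) (k : ℕ) :
    genBinom t (k + 1) * (k + 1) = genBinom t k * (t - k) := by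
  unfold genBinom
  rw [Finset.prod_range_succ, Nat.factorial_succ]
  push_cast
  field_simp

lemma genBinom_add_one_succ (t : ℝ) (k : ℕ) :
    genBinom (t + 1) (k + 1) = genBinom t (k + 1) + genBinom t k := by
  unfold genBinom
  rw [Finset.prod_range_succ' (fun i => t + 1 - (i : ℝ)), Finset.prod_range_succ,
    Nat.factorial_succ]
  simp only [Nat.cast_succ, add_sub_add_right_eq_sub, CharP.cast_eq_zero, sub_zero]
  push_cast
  field_simp
  ring

lemma jacobiP_add_one_sub_jacobiP (n : ℕ) (α β x : ℝ) :
    jacobiP n (α + 1) β x - jacobiP n α β x =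
      ∑ m ∈ Finset.range n, genBinom (n + α) m * genBinom (n + β) (n - (m + 1)) *
        ((x - 1) / 2) ^ (n - (m + 1)) * ((x + 1) / 2) ^ (m + 1) := by
  unfold jacobiP
  rw [← Finset.sum_sub_distrib, Finset.sum_range_succ']
  simp only [← add_assoc, genBinom_add_one_succ, Nat.sub_zero, genBinom_zero, pow_zero, sub_self,
    add_zero]
  exact Finset.sum_congr rfl fun m _ => by ring

-- `n - m - 1` and `m - 1` truncate only in terms whose coefficient vanishes.
noncomputable def jacobiPDeriv (n : ℕ) (α β : ℝ) (x : ℝ) : ℝ :=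
  ∑ m ∈ Finset.range (n + 1), genBinom (n + α) m * genBinom (n + β) (n - m) *
    ((n - m : ℕ) * ((x - 1) / 2) ^ (n - m - 1) * ((x + 1) / 2) ^ m
      + m * ((x - 1) / 2) ^ (n - m) * ((x + 1) / 2) ^ (m - 1)) / 2

lemma hasDerivAt_jacobiP (n : ℕ) (α β x : ℝ) :
    HasDerivAt (jacobiP n α β) (jacobiPDeriv n α β x) x := by
  have hu : HasDerivAt (fun x : ℝ => (x - 1) / 2) (1 / 2) x :=
    ((hasDerivAt_id x).sub_const 1).div_const 2
  have hv : HasDerivAt (fun x : ℝ => (x + 1) / 2) (1 / 2) x :=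
    ((hasDerivAt_id x).add_const 1).div_const 2
  refine HasDerivAt.fun_sum fun m _ => ?_
  refine (((hu.fun_pow (n - m)).const_mul _).fun_mul (hv.fun_pow m)).congr_deriv ?_
  ring

lemma one_add_mul_jacobiPDeriv (n : ℕ) (α β x : ℝ) :
    (1 + x) * jacobiPDeriv n α β x =
      (n + α + β + 1) * (jacobiP n (α + 1) β x - jacobiP n α β x) := by
  rw [jacobiP_add_one_sub_jacobiP, Finset.mul_sum, jacobiPDeriv, Finset.mul_sum]
  set u := (x - 1) / 2
  set v := (x + 1) / 2
  set a := genBinom (n + α)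
  set b := genBinom (n + β)
  have hx : 1 + x = 2 * v := by ring
  have dropTop :
      ∑ m ∈ Finset.range (n + 1), a m * b (n - m) * (n - m : ℕ) * u ^ (n - m - 1) * v ^ (m + 1)
        = ∑ m ∈ Finset.range n,
            a m * b (n - m) * (n - m : ℕ) * u ^ (n - (m + 1)) * v ^ (m + 1) := by
    rw [Finset.sum_range_succ, Nat.sub_self, Nat.cast_zero, mul_zero, zero_mul, zero_mul,
      add_zero]
    exact Finset.sum_congr rfl fun m _ => by rw [Nat.sub_sub]
  have shiftIndex : ∑ m ∈ Finset.range (n + 1), a m * b (n - m) * m * u ^ (n - m) * v ^ m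
      = ∑ m ∈ Finset.range n,
          a (m + 1) * (m + 1 : ℕ) * b (n - (m + 1)) * u ^ (n - (m + 1)) * v ^ (m + 1) := by
    rw [Finset.sum_range_succ']
    simp only [Nat.cast_zero, mul_zero, zero_mul, add_zero]
    exact Finset.sum_congr rfl fun m _ => by ring
  have expand : ∀ m ∈ Finset.range (n + 1),
      2 * v * (a m * b (n - m) *
          ((n - m : ℕ) * u ^ (n - m - 1) * v ^ m + m * u ^ (n - m) * v ^ (m - 1)) / 2)
        = a m * b (n - m) * (n - m : ℕ) * u ^ (n - m - 1) * v ^ (m + 1)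
          + a m * b (n - m) * m * u ^ (n - m) * v ^ m := by
    rintro (_ | m) _
    · simp only [CharP.cast_eq_zero]; ring
    · simp only [Nat.add_sub_cancel]; ring
  rw [hx, Finset.sum_congr rfl expand, Finset.sum_add_distrib, dropTop, shiftIndex,
    ← Finset.sum_add_distrib]
  refine Finset.sum_congr rfl fun m hm => ?_
  obtain ⟨k, rfl⟩ := Nat.exists_eq_add_of_lt (Finset.mem_range.mp hm)
  have hk : m + k + 1 - m = k + 1 := by omega
  have hk' : m + k + 1 - (m + 1) = k := by omega
  rw [hk, hk']
  have ha : a (m + 1) * (m + 1) = a m * ((m + k + 1 : ℕ) + α - m) := genBinom_succ_mul _ m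
  have hb : b (k + 1) * (k + 1) = b k * ((m + k + 1 : ℕ) + β - k) := genBinom_succ_mul _ k
  push_cast at ha hb ⊢
  linear_combination (b k * u ^ k * v ^ (m + 1)) * ha + (a m * u ^ k * v ^ (m + 1)) * hb

lemma sin_half_sq (x : ℝ) : sin (x / 2) ^ 2 = (1 - cos x) / 2 := by
  rw [sin_sq, cos_sq, mul_div_cancel₀ x two_ne_zero]
  ring

lemma sin_mul_deriv_div_cos_weight {a b θ f' : ℝ} {f : ℝ → ℝ} (hθ : θ ∈ Ioo 0 π)
    (hf : HasDerivAt f f' (cos θ)) (hf0 : f (cos θ) ≠ 0) :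
    sin θ * deriv (fun t => (1 - cos t) ^ a * (1 + cos t) ^ b * f (cos t)) θ
        / ((1 - cos θ) ^ a * (1 + cos θ) ^ b * f (cos θ))
      = a * (1 + cos θ) - b * (1 - cos θ) - (1 - cos θ) * ((1 + cos θ) * f') / f (cos θ) := by
  have hsin : sin θ ^ 2 = (1 - cos θ) * (1 + cos θ) := by rw [sin_sq]; ring
  have hminus : 0 < 1 - cos θ := by
    linarith [cos_zero ▸ cos_lt_cos_of_nonneg_of_le_pi le_rfl hθ.2.le hθ.1]
  have hplus : 0 < 1 + cos θ := by
    linarith [cos_pi ▸ cos_lt_cos_of_nonneg_of_le_pi hθ.1.le le_rfl hθ.2]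
  have hA := ((hasDerivAt_cos θ).const_sub 1).rpow_const (p := a) (Or.inl hminus.ne')
  have hB := ((hasDerivAt_cos θ).const_add 1).rpow_const (p := b) (Or.inl hplus.ne')
  have hC : HasDerivAt (fun t => f (cos t)) (f' * -sin θ) θ := hf.comp θ (hasDerivAt_cos θ)
  have hF := (hA.fun_mul hB).fun_mul hC
  rw [hF.deriv, rpow_sub_one hminus.ne', rpow_sub_one hplus.ne']
  have hApos := rpow_pos_of_pos hminus a
  have hBpos := rpow_pos_of_pos hplus b
  field_simp
  rw [hsin]
  ring

theorem stmt14_general (n : ℕ) (α β : ℝ)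
    (L : ℝ) (hL : L = 2 * n + α + β + 1)
    (Y : ℝ → ℝ)
    (hY : ∀ θ ∈ Set.Ioo 0 Real.pi,
      Y θ = (1 - Real.cos θ) ^ ((2 * α + 1) / 4) * (1 + Real.cos θ) ^ ((2 * β + 1) / 4) *
        jacobiP n α β (Real.cos θ))
    (θ : ℝ) (hθ : θ ∈ Set.Ioo 0 Real.pi) (hP : jacobiP n α β (Real.cos θ) ≠ 0) :
    Real.sin θ * deriv Y θ / Y θ = 1 / 2 + α + L * Real.sin (θ / 2) ^ 2
      - 2 * ((n : ℝ) + α + β + 1) * Real.sin (θ / 2) ^ 2 *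
        (jacobiP n (α + 1) β (Real.cos θ) / jacobiP n α β (Real.cos θ)) := by
  have hYloc : Y =ᶠ[nhds θ] fun t =>
      (1 - cos t) ^ ((2 * α + 1) / 4) * (1 + cos t) ^ ((2 * β + 1) / 4) * jacobiP n α β (cos t) :=
    eventuallyEq_of_mem (isOpen_Ioo.mem_nhds hθ) hY
  rw [hYloc.deriv_eq, hY θ hθ,
    sin_mul_deriv_div_cos_weight hθ (hasDerivAt_jacobiP n α β _) hP,
    one_add_mul_jacobiPDeriv, sin_half_sq, hL]
  field_simp
  ring

theorem stmt14 (n : ℕ) (α β : ℝ) (hα : -1 < α) (hβ : -1 < β)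
    (L : ℝ) (hL : L = 2 * n + α + β + 1)
    (Y : ℝ → ℝ)
    (hY : ∀ θ ∈ Set.Ioo 0 Real.pi,
      Y θ = (1 - Real.cos θ) ^ ((2 * α + 1) / 4) * (1 + Real.cos θ) ^ ((2 * β + 1) / 4) *
        jacobiP n α β (Real.cos θ))
    (θ : ℝ) (hθ : θ ∈ Set.Ioo 0 Real.pi) (hP : jacobiP n α β (Real.cos θ) ≠ 0) :
    Real.sin θ * deriv Y θ / Y θ = 1 / 2 + α + L * Real.sin (θ / 2) ^ 2
      - 2 * ((n : ℝ) + α + β + 1) * Real.sin (θ / 2) ^ 2 *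
        (jacobiP n (α + 1) β (Real.cos θ) / jacobiP n α β (Real.cos θ)) :=
  stmt14_general n α β L hL Y hY θ hθ hP
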